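/- Let L = −Δ + V + 1 be a Schrödinger operator on ℝ^3 with smooth exponentially decaying potential V, and let φ satisfy Lφ = −ν²φ with ν > 0. Then for |β| < 1 along e₁, the function 𝒴⁻(x) := e^{γν β·x}(φ, −γβ·∇φ − γνφ) evaluated at the boosted variable Λ_β x is an eigenfunction of the matrix operator ℒ_β = [[β·∇, 1],[Δ − V_β − 1, β·∇]] with eigenvalue −ν/γ, where V_β(x) = V(Λ_β x) and γ = (1-|β|²)^{-1/2}. -/

import Mathlib

open RealInnerProductSpace

noncomputable section

/-- Second directional derivative along `v`. -/
def secondDeriv (u : EuclideanSpace ℝ (Fin 3) → ℝ) (p v : EuclideanSpace ℝ (Fin 3)) : ℝ :=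
  fderiv ℝ (fun q => fderiv ℝ u q v) p v

/-- Laplacian on `ℝ³` expressed via second directional derivatives. -/
def laplacian (u : EuclideanSpace ℝ (Fin 3) → ℝ) (p : EuclideanSpace ℝ (Fin 3)) : ℝ :=
  ∑ i : Fin 3, secondDeriv u p (EuclideanSpace.single i (1 : ℝ))

section AuxLemmas

local notation "𝔼" => EuclideanSpace ℝ (Fin 3)

lemma hasFDerivAt_expInner (c : ℝ) (β x : 𝔼) :
    HasFDerivAt (fun y : 𝔼 => Real.exp (c * ⟪β, y⟫))
      ((c * Real.exp (c * ⟪β, x⟫)) • (innerSL ℝ β : 𝔼 →L[ℝ] ℝ)) x := by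
  have h0 : HasFDerivAt (fun y : 𝔼 => (⟪β, y⟫ : ℝ)) (innerSL ℝ β : 𝔼 →L[ℝ] ℝ) x :=
    (innerSL ℝ β).hasFDerivAt
  have h1 : HasFDerivAt (fun y : 𝔼 => c * ⟪β, y⟫)
      (c • (innerSL ℝ β : 𝔼 →L[ℝ] ℝ)) x := h0.const_mul c
  have h2 := (Real.hasDerivAt_exp (c * ⟪β, x⟫)).comp_hasFDerivAt x h1
  have h3 : (c * Real.exp (c * ⟪β, x⟫)) • (innerSL ℝ β : 𝔼 →L[ℝ] ℝ)
      = Real.exp (c * ⟪β, x⟫) • c • (innerSL ℝ β : 𝔼 →L[ℝ] ℝ) := by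
    rw [smul_smul, mul_comm]
  rw [h3]
  exact h2

lemma fderiv_expInner_mul (c : ℝ) (β : 𝔼) {g : 𝔼 → ℝ} {x : 𝔼}
    (hg : DifferentiableAt ℝ g x) (v : 𝔼) :
    fderiv ℝ (fun y => Real.exp (c * ⟪β, y⟫) * g y) x v
      = c * ⟪β, v⟫ * Real.exp (c * ⟪β, x⟫) * g x
        + Real.exp (c * ⟪β, x⟫) * fderiv ℝ g x v := by
  have h := ((hasFDerivAt_expInner c β x).mul hg.hasFDerivAt).fderiv
  rw [show (fun y => Real.exp (c * ⟪β, y⟫) * g y) = (fun y => Real.exp (c * ⟪β, y⟫)) * g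
    from rfl, h]
  simp only [ContinuousLinearMap.add_apply, ContinuousLinearMap.smul_apply, smul_eq_mul,
    innerSL_apply_apply]
  ring

lemma hasFDerivAt_comp_clm (φ : 𝔼 → ℝ) (hφ : Differentiable ℝ φ) (A : 𝔼 →L[ℝ] 𝔼) (x : 𝔼) :
    HasFDerivAt (fun y => φ (A y)) ((fderiv ℝ φ (A x)).comp A) x :=
  (hφ (A x)).hasFDerivAt.comp x A.hasFDerivAt

lemma fderiv_comp_clm (φ : 𝔼 → ℝ) (hφ : Differentiable ℝ φ) (A : 𝔼 →L[ℝ] 𝔼) (x v : 𝔼) :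
    fderiv ℝ (fun y => φ (A y)) x v = fderiv ℝ φ (A x) (A v) := by
  rw [(hasFDerivAt_comp_clm φ hφ A x).fderiv]; rfl

lemma hasFDerivAt_fderiv_comp_clm (φ : 𝔼 → ℝ) (hφ : ContDiff ℝ (⊤ : ℕ∞) φ) (A : 𝔼 →L[ℝ] 𝔼)
    (w x : 𝔼) :
    HasFDerivAt (fun y => fderiv ℝ φ (A y) w)
      ((ContinuousLinearMap.apply ℝ ℝ w).comp ((fderiv ℝ (fderiv ℝ φ) (A x)).comp A)) x := by
  have hd : Differentiable ℝ (fderiv ℝ φ) := (hφ.fderiv_right (m := (⊤ : ℕ∞)) (by simp)).differentiable (by simp)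
  exact (ContinuousLinearMap.apply ℝ ℝ w).hasFDerivAt.comp x
    ((hd (A x)).hasFDerivAt.comp x A.hasFDerivAt)

lemma fderiv_fderiv_comp_clm (φ : 𝔼 → ℝ) (hφ : ContDiff ℝ (⊤ : ℕ∞) φ) (A : 𝔼 →L[ℝ] 𝔼) (x v w : 𝔼) :
    fderiv ℝ (fun y => fderiv ℝ φ (A y) w) x v
      = fderiv ℝ (fderiv ℝ φ) (A x) (A v) w := by
  rw [(hasFDerivAt_fderiv_comp_clm φ hφ A w x).fderiv]; rfl

lemma differentiable_fderiv_comp_clm (φ : 𝔼 → ℝ) (hφ : ContDiff ℝ (⊤ : ℕ∞) φ) (A : 𝔼 →L[ℝ] 𝔼)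
    (w : 𝔼) : Differentiable ℝ (fun y => fderiv ℝ φ (A y) w) :=
  fun x => (hasFDerivAt_fderiv_comp_clm φ hφ A w x).differentiableAt

lemma secondDeriv_eq (φ : 𝔼 → ℝ) (hφ : ContDiff ℝ (⊤ : ℕ∞) φ) (q v : 𝔼) :
    secondDeriv φ q v = fderiv ℝ (fderiv ℝ φ) q v v := by
  have h := fderiv_fderiv_comp_clm φ hφ (ContinuousLinearMap.id ℝ 𝔼) q v v
  simpa [secondDeriv] using h

lemma sum_inner_apply (β : 𝔼) (T : 𝔼 →L[ℝ] ℝ) :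
    ∑ i : Fin 3, ⟪β, EuclideanSpace.single i (1 : ℝ)⟫ * T (EuclideanSpace.single i (1 : ℝ))
      = T β := by
  conv_rhs => rw [← (EuclideanSpace.basisFun (Fin 3) ℝ).sum_repr' β]
  rw [map_sum]
  refine Finset.sum_congr rfl fun i _ => ?_
  rw [map_smul, smul_eq_mul, EuclideanSpace.basisFun_apply]
  rw [real_inner_comm]

lemma sum_inner_sq (β : 𝔼) :
    ∑ i : Fin 3, ⟪β, EuclideanSpace.single i (1 : ℝ)⟫ * ⟪β, EuclideanSpace.single i (1 : ℝ)⟫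
      = ‖β‖ ^ 2 := by
  have h := sum_inner_apply β (innerSL ℝ β)
  simp only [innerSL_apply_apply] at h
  rw [h, real_inner_self_eq_norm_sq]

end AuxLemmas

set_option maxHeartbeats 2000000 in
/-- If `(−Δ + V + 1)φ = −ν²φ` with `ν > 0`, then the boosted pair
`𝒴⁻(x) = e^{γν β·x}(φ, −γβ·∇φ − γνφ)_β(x)` is an eigenfunction of the matrix operator
`ℒ_β = [[β·∇, 1],[Δ − V_β − 1, β·∇]]` with eigenvalue `−ν/γ`. -/
theorem boosted_eigenfunction_of_matrix_operator
    (V : EuclideanSpace ℝ (Fin 3) → ℝ) (hV : ContDiff ℝ (⊤ : ℕ∞) V)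
    (hVdec : ∃ C a : ℝ, 0 < a ∧ ∀ x, |V x| ≤ C * Real.exp (-a * ‖x‖))
    (φ : EuclideanSpace ℝ (Fin 3) → ℝ) (hφ : ContDiff ℝ (⊤ : ℕ∞) φ)
    (ν : ℝ) (hν : 0 < ν)
    (hEig : ∀ x, -(laplacian φ x) + V x * φ x + φ x = -(ν ^ 2) * φ x)
    (β : EuclideanSpace ℝ (Fin 3)) (hβ : ‖β‖ < 1)
    (γ : ℝ) (hγ : γ = (1 - ‖β‖ ^ 2) ^ (-(1 / 2 : ℝ)))
    (Λ : EuclideanSpace ℝ (Fin 3) → EuclideanSpace ℝ (Fin 3))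
    (hΛ : ∀ x, Λ x = x + ((γ - 1) * (⟪β, x⟫ / ‖β‖ ^ 2)) • β)
    (Vβ : EuclideanSpace ℝ (Fin 3) → ℝ) (hVβ : ∀ x, Vβ x = V (Λ x))
    (Y1 Y2 : EuclideanSpace ℝ (Fin 3) → ℝ)
    (hY1 : ∀ x, Y1 x = Real.exp (γ * ν * ⟪β, x⟫) * φ (Λ x))
    (hY2 : ∀ x, Y2 x = Real.exp (γ * ν * ⟪β, x⟫) *
      (-(γ * fderiv ℝ φ (Λ x) β) - γ * ν * φ (Λ x))) :
    (∀ x, fderiv ℝ Y1 x β + Y2 x = (-(ν / γ)) * Y1 x) ∧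
    (∀ x, laplacian Y1 x - Vβ x * Y1 x - Y1 x + fderiv ℝ Y2 x β
        = (-(ν / γ)) * Y2 x) := by
  have hnn := norm_nonneg β
  have h1b : (0 : ℝ) < 1 - ‖β‖ ^ 2 := by nlinarith
  have hγpos : 0 < γ := by rw [hγ]; exact Real.rpow_pos_of_pos h1b _
  have hγ2 : γ ^ 2 * (1 - ‖β‖ ^ 2) = 1 := by
    rw [hγ, ← Real.rpow_natCast ((1 - ‖β‖ ^ 2) ^ (-(1 / 2 : ℝ))) 2,
      ← Real.rpow_mul h1b.le]
    norm_num
    rw [Real.rpow_neg_one]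
    exact inv_mul_cancel₀ h1b.ne'
  have hdiv : ν / γ = ν * (γ * (1 - ‖β‖ ^ 2)) := by
    rw [div_eq_iff hγpos.ne']
    linear_combination (-ν) * hγ2
  set s : ℝ := (γ - 1) / ‖β‖ ^ 2 with hs
  set A : EuclideanSpace ℝ (Fin 3) →L[ℝ] EuclideanSpace ℝ (Fin 3) :=
    ContinuousLinearMap.id ℝ _ + (innerSL ℝ β).smulRight (s • β) with hAdef
  have hAx : ∀ x, A x = x + (⟪β, x⟫ * s) • β := by
    intro x
    simp [hAdef, smul_smul, ContinuousLinearMap.smulRight_apply]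
  have hA : ∀ x, Λ x = A x := by
    intro x
    have hcoef : (γ - 1) * (⟪β, x⟫ / ‖β‖ ^ 2) = ⟪β, x⟫ * s := by rw [hs]; ring
    rw [hΛ, hAx, hcoef]
  have hAβ : A β = γ • β := by
    rw [hAx, real_inner_self_eq_norm_sq]
    by_cases hβ0 : β = 0
    · simp [hβ0]
    · have hb2 : ‖β‖ ^ 2 ≠ 0 := pow_ne_zero _ (norm_ne_zero_iff.mpr hβ0)
      have hc : ‖β‖ ^ 2 * s = γ - 1 := by rw [hs]; field_simp
      rw [hc, sub_smul, one_smul]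
      abel
  have hφd : Differentiable ℝ φ := hφ.differentiable (by simp)
  have hg1 : Differentiable ℝ (fun x => φ (A x)) := hφd.comp A.differentiable
  have hgW : ∀ w, Differentiable ℝ (fun x => fderiv ℝ φ (A x) w) :=
    fun w => differentiable_fderiv_comp_clm φ hφ A w
  have hY1' : Y1 = fun x => Real.exp (γ * ν * ⟪β, x⟫) * φ (A x) := by
    funext x; rw [hY1, hA]
  have hY2' : Y2 = fun x => Real.exp (γ * ν * ⟪β, x⟫) *
      (-(γ * fderiv ℝ φ (A x) β) - γ * ν * φ (A x)) := by
    funext x; rw [hY2, hA]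
  -- first derivative of Y1
  have hDY1 : ∀ p v, fderiv ℝ Y1 p v
      = γ * ν * ⟪β, v⟫ * Real.exp (γ * ν * ⟪β, p⟫) * φ (A p)
        + Real.exp (γ * ν * ⟪β, p⟫) * fderiv ℝ φ (A p) (A v) := by
    intro p v
    rw [hY1', fderiv_expInner_mul (γ * ν) β (hg1 p) v, fderiv_comp_clm φ hφd A p v]
  -- second derivative of Y1
  have hD2Y1 : ∀ p v, secondDeriv Y1 p v
      = γ * ν * ⟪β, v⟫ * Real.exp (γ * ν * ⟪β, p⟫)
          * (γ * ν * ⟪β, v⟫ * φ (A p) + fderiv ℝ φ (A p) (A v))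
        + Real.exp (γ * ν * ⟪β, p⟫) * (γ * ν * ⟪β, v⟫ * fderiv ℝ φ (A p) (A v)
            + fderiv ℝ (fderiv ℝ φ) (A p) (A v) (A v)) := by
    intro p v
    have hfun : (fun x => fderiv ℝ Y1 x v)
        = fun x => Real.exp (γ * ν * ⟪β, x⟫)
            * (γ * ν * ⟪β, v⟫ * φ (A x) + fderiv ℝ φ (A x) (A v)) := by
      funext x; rw [hDY1 x v]; ring
    have hgd : DifferentiableAt ℝ
        (fun x => γ * ν * ⟪β, v⟫ * φ (A x) + fderiv ℝ φ (A x) (A v)) p :=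
      ((hg1 p).const_mul _).add ((hgW (A v)) p)
    have e1 : fderiv ℝ (fun x => γ * ν * ⟪β, v⟫ * φ (A x) + fderiv ℝ φ (A x) (A v)) p v
        = γ * ν * ⟪β, v⟫ * fderiv ℝ φ (A p) (A v)
          + fderiv ℝ (fderiv ℝ φ) (A p) (A v) (A v) := by
      rw [fderiv_fun_add ((hg1 p).const_mul _) ((hgW (A v)) p),
        ContinuousLinearMap.add_apply, fderiv_const_mul (hg1 p),
        ContinuousLinearMap.smul_apply, smul_eq_mul, fderiv_comp_clm φ hφd A p v,
        fderiv_fderiv_comp_clm φ hφ A p v (A v)]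
    rw [secondDeriv, hfun, fderiv_expInner_mul (γ * ν) β hgd v, e1]
  -- the Hessian trace identity
  have hS3 : ∀ p, ∑ i : Fin 3,
        fderiv ℝ (fderiv ℝ φ) (A p) (A (EuclideanSpace.single i (1 : ℝ)))
          (A (EuclideanSpace.single i (1 : ℝ)))
      = laplacian φ (A p) + γ ^ 2 * fderiv ℝ (fderiv ℝ φ) (A p) β β := by
    intro p
    set Hp := fderiv ℝ (fderiv ℝ φ) (A p) with hHp
    have hterm : ∀ i : Fin 3,
        Hp (A (EuclideanSpace.single i (1 : ℝ))) (A (EuclideanSpace.single i (1 : ℝ)))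
          = Hp (EuclideanSpace.single i (1 : ℝ)) (EuclideanSpace.single i (1 : ℝ))
            + s * (⟪β, EuclideanSpace.single i (1 : ℝ)⟫
                * (Hp.flip β) (EuclideanSpace.single i (1 : ℝ)))
            + s * (⟪β, EuclideanSpace.single i (1 : ℝ)⟫
                * (Hp β) (EuclideanSpace.single i (1 : ℝ)))
            + (s * s * (Hp β β)) * (⟪β, EuclideanSpace.single i (1 : ℝ)⟫
                * ⟪β, EuclideanSpace.single i (1 : ℝ)⟫) := by
      intro i
      rw [hAx (EuclideanSpace.single i (1 : ℝ))]
      simp only [map_add, map_smul, ContinuousLinearMap.add_apply,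
        ContinuousLinearMap.smul_apply, smul_eq_mul, ContinuousLinearMap.flip_apply]
      ring
    rw [Finset.sum_congr rfl fun i _ => hterm i]
    rw [Finset.sum_add_distrib, Finset.sum_add_distrib, Finset.sum_add_distrib,
      ← Finset.mul_sum, ← Finset.mul_sum, ← Finset.mul_sum]
    rw [sum_inner_apply β (Hp.flip β), sum_inner_apply β (Hp β), sum_inner_sq β]
    rw [ContinuousLinearMap.flip_apply]
    have hlapφ : ∑ i : Fin 3,
        Hp (EuclideanSpace.single i (1 : ℝ)) (EuclideanSpace.single i (1 : ℝ))
          = laplacian φ (A p) := by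
      rw [laplacian]
      exact Finset.sum_congr rfl fun i _ => (secondDeriv_eq φ hφ (A p) _).symm
    rw [hlapφ]
    have hcoef : s * Hp β β + s * Hp β β + s * s * Hp β β * ‖β‖ ^ 2
        = γ ^ 2 * Hp β β := by
      by_cases hβ0 : β = 0
      · simp [hβ0]
      · have hb2 : ‖β‖ ^ 2 ≠ 0 := pow_ne_zero _ (norm_ne_zero_iff.mpr hβ0)
        have h4 : 2 * s + s * s * ‖β‖ ^ 2 = γ ^ 2 := by
          rw [hs]; field_simp; nlinarith [hγ2]
        linear_combination (Hp β β) * h4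
    linear_combination hcoef
  -- Laplacian of Y1
  have hlapY1 : ∀ p, laplacian Y1 p
      = (γ * ν) ^ 2 * ‖β‖ ^ 2 * Real.exp (γ * ν * ⟪β, p⟫) * φ (A p)
        + 2 * (γ * ν) * Real.exp (γ * ν * ⟪β, p⟫) * (γ * fderiv ℝ φ (A p) β)
        + Real.exp (γ * ν * ⟪β, p⟫)
            * (laplacian φ (A p) + γ ^ 2 * fderiv ℝ (fderiv ℝ φ) (A p) β β) := by
    intro p
    have hS2 : ∑ i : Fin 3, ⟪β, EuclideanSpace.single i (1 : ℝ)⟫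
          * fderiv ℝ φ (A p) (A (EuclideanSpace.single i (1 : ℝ)))
        = γ * fderiv ℝ φ (A p) β := by
      have h := sum_inner_apply β ((fderiv ℝ φ (A p)).comp A)
      simp only [ContinuousLinearMap.comp_apply] at h
      rw [h, hAβ, map_smul, smul_eq_mul]
    have expand : laplacian Y1 p = ∑ i : Fin 3,
        (((γ * ν) ^ 2 * Real.exp (γ * ν * ⟪β, p⟫) * φ (A p))
            * (⟪β, EuclideanSpace.single i (1 : ℝ)⟫ * ⟪β, EuclideanSpace.single i (1 : ℝ)⟫)
          + (2 * (γ * ν) * Real.exp (γ * ν * ⟪β, p⟫))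
            * (⟪β, EuclideanSpace.single i (1 : ℝ)⟫
                * fderiv ℝ φ (A p) (A (EuclideanSpace.single i (1 : ℝ))))
          + Real.exp (γ * ν * ⟪β, p⟫)
            * (fderiv ℝ (fderiv ℝ φ) (A p) (A (EuclideanSpace.single i (1 : ℝ)))
                (A (EuclideanSpace.single i (1 : ℝ))))) := by
      rw [laplacian]
      refine Finset.sum_congr rfl fun i _ => ?_
      rw [hD2Y1 p (EuclideanSpace.single i (1 : ℝ))]
      ring
    rw [expand, Finset.sum_add_distrib, Finset.sum_add_distrib,
      ← Finset.mul_sum, ← Finset.mul_sum, ← Finset.mul_sum,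
      sum_inner_sq β, hS2, hS3 p]
    ring
  -- first derivative of Y2
  have hDY2 : ∀ p, fderiv ℝ Y2 p β
      = γ * ν * ‖β‖ ^ 2 * Real.exp (γ * ν * ⟪β, p⟫)
          * (-(γ * fderiv ℝ φ (A p) β) - γ * ν * φ (A p))
        + Real.exp (γ * ν * ⟪β, p⟫)
          * (-(γ * (γ * fderiv ℝ (fderiv ℝ φ) (A p) β β))
              - γ * ν * (γ * fderiv ℝ φ (A p) β)) := by
    intro p
    have hg2d : DifferentiableAt ℝ
        (fun x => -(γ * fderiv ℝ φ (A x) β) - γ * ν * φ (A x)) p :=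
      ((((hgW β) p).const_mul γ).neg).sub ((hg1 p).const_mul (γ * ν))
    have e2 : fderiv ℝ (fun x => -(γ * fderiv ℝ φ (A x) β) - γ * ν * φ (A x)) p β
        = -(γ * fderiv ℝ (fderiv ℝ φ) (A p) (A β) β)
          - γ * ν * fderiv ℝ φ (A p) (A β) := by
      rw [fderiv_fun_sub (f := fun y => -(γ * fderiv ℝ φ (A y) β)) ((((hgW β) p).const_mul γ).neg) ((hg1 p).const_mul (γ * ν)),
        ContinuousLinearMap.sub_apply, fderiv_fun_neg, ContinuousLinearMap.neg_apply,
        fderiv_const_mul ((hgW β) p), ContinuousLinearMap.smul_apply, smul_eq_mul,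
        fderiv_const_mul (hg1 p), ContinuousLinearMap.smul_apply, smul_eq_mul,
        fderiv_comp_clm φ hφd A p β, fderiv_fderiv_comp_clm φ hφ A p β β]
    rw [hY2', fderiv_expInner_mul (γ * ν) β hg2d β, e2, real_inner_self_eq_norm_sq]
    simp only [hAβ, map_smul, ContinuousLinearMap.smul_apply, smul_eq_mul]
  constructor
  · intro p
    rw [hDY1 p β, hY2 p, hY1 p, hA p, real_inner_self_eq_norm_sq, hdiv]
    simp only [hAβ, map_smul, ContinuousLinearMap.smul_apply, smul_eq_mul]
    ring
  · intro p
    have hL : laplacian φ (A p) = V (A p) * φ (A p) + φ (A p) + ν ^ 2 * φ (A p) := by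
      have h := hEig (A p); linarith
    rw [hlapY1 p, hDY2 p, hVβ p, hY1 p, hY2 p, hA p, hL, hdiv]
    linear_combination (-(Real.exp (γ * ν * ⟪β, p⟫) * φ (A p) * ν ^ 2)) * hγ2

end
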